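/- Let n ≥ 1, let P be the Birkhoff polytope in R^{n×n}, and let f : R^{n×n} → R be continuous, convex, and integer-valued on the vertices of P. Let δ ∈ (0,1) be such that |f(x) − f(y)| < 1/2 whenever x is a vertex of P and ‖x − y‖ < δ (Frobenius norm). Let 0 < t < δ/(n(2n−1)) and let P'(t) be the perturbed polytope of n×n matrices x with x_{ij} ≥ 0 for all i,j, Σ_{j=1}^n x_{ij} = 1 − t for every i, and Σ_{i=1}^n x_{ij} = 1 for j = 1,…,n−1. Then for every integer K, if K ≥ max over the vertices of P'(t) of f, then K ≥ max over the vertices of P of f. -/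

import Mathlib

/-!
Being convex on a finite-dimensional space, `f` is continuous, and `P'(t)` is compact and convex,
so by Krein–Milman the bound `f ≤ K` on the vertices of `P'(t)` extends to all of `P'(t)`.
Every doubly stochastic `x` lies within Frobenius distance `n²t < δ` of a point of `P'(t)`,
hence `f x < K + 1/2`; as `f x` is an integer at a vertex, `f x ≤ K`.
-/

open Finset

theorem ConvexOn.le_of_forall_extremePoints_le {E : Type*} [AddCommGroup E] [Module ℝ E]
    [TopologicalSpace E] [T2Space E] [IsTopologicalAddGroup E] [ContinuousSMul ℝ E]
    [LocallyConvexSpace ℝ E] {s : Set E} {f : E → ℝ} {c : ℝ} (hs : IsCompact s)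
    (hf : ConvexOn ℝ s f) (hfc : ContinuousOn f s) (h : ∀ x ∈ s.extremePoints ℝ, f x ≤ c) :
    ∀ x ∈ s, f x ≤ c := by
  have hsub : convexHull ℝ (s.extremePoints ℝ) ⊆ s ∩ f ⁻¹' Set.Iic c := fun x hx => by
    obtain ⟨y, hy, hxy⟩ := hf.exists_ge_of_mem_convexHull extremePoints_subset hx
    exact ⟨convexHull_min extremePoints_subset hf.1 hx, hxy.trans (h y hy)⟩
  intro x hx
  rw [← closure_convexHull_extremePoints hs hf.1] at hx
  exact (closure_minimal hsub (hfc.preimage_isClosed_of_isClosed hs.isClosed isClosed_Iic) hx).2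

theorem ConvexOn.continuous_matrix {m n : Type*} [Fintype m] [Fintype n]
    {f : Matrix m n ℝ → ℝ} (hf : ConvexOn ℝ Set.univ f) : Continuous f :=
  continuousOn_univ.mp (ConvexOn.continuousOn (E := m → n → ℝ) isOpen_univ hf)

theorem Real.sqrt_sum_sum_sq_le {m n : Type*} [Fintype m] [Fintype n] {a : m → n → ℝ} {c : ℝ}
    (hc : 0 ≤ c) (ha : ∀ i j, |a i j| ≤ c) :
    √(∑ i, ∑ j, a i j ^ 2) ≤ √(Fintype.card m * Fintype.card n) * c := by
  have hsum : ∑ i, ∑ j, a i j ^ 2 ≤ Fintype.card m * Fintype.card n * c ^ 2 :=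
    calc ∑ i, ∑ j, a i j ^ 2 ≤ ∑ _i : m, ∑ _j : n, c ^ 2 :=
          sum_le_sum fun i _ => sum_le_sum fun j _ => sq_le_sq.mpr ((ha i j).trans (le_abs_self c))
      _ = _ := by simp [mul_assoc]
  calc √(∑ i, ∑ j, a i j ^ 2) ≤ √(Fintype.card m * Fintype.card n * c ^ 2) :=
        Real.sqrt_le_sqrt hsum
    _ = _ := by rw [Real.sqrt_mul (by positivity), Real.sqrt_sq hc]

def perturbedBirkhoff (n : ℕ) (t : ℝ) : Set (Matrix (Fin n) (Fin n) ℝ) :=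
  {x | (∀ i j, 0 ≤ x i j) ∧ (∀ i, ∑ j, x i j = 1 - t) ∧
      (∀ j : Fin n, (j : ℕ) < n - 1 → ∑ i, x i j = 1)}

section perturbedBirkhoff

variable {n : ℕ} {t : ℝ}

theorem convex_perturbedBirkhoff : Convex ℝ (perturbedBirkhoff n t) := by
  rintro x ⟨hx0, hxr, hxc⟩ y ⟨hy0, hyr, hyc⟩ a b ha hb hab
  refine ⟨fun i j => ?_, fun i => ?_, fun j hj => ?_⟩
  · simp [add_nonneg, mul_nonneg, ha, hb, hx0, hy0]
  · simp [sum_add_distrib, ← mul_sum, hxr, hyr]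
    linear_combination (1 - t) * hab
  · simp [sum_add_distrib, ← mul_sum, hxc j hj, hyc j hj, hab]

theorem isClosed_perturbedBirkhoff : IsClosed (perturbedBirkhoff n t) := by
  simp only [perturbedBirkhoff, Set.ofPred_and, Set.ofPred_forall]
  refine .inter (isClosed_iInter fun i => isClosed_iInter fun j => isClosed_le ?_ ?_)
    (.inter (isClosed_iInter fun i => isClosed_eq ?_ ?_)
      (isClosed_iInter fun j => isClosed_iInter fun _ => isClosed_eq ?_ ?_)) <;> fun_prop

theorem isCompact_perturbedBirkhoff : IsCompact (perturbedBirkhoff n t) := by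
  refine (isCompact_univ_pi fun _ => isCompact_univ_pi fun _ => isCompact_Icc (a := 0) (b := 1 - t))
    |>.of_isClosed_subset isClosed_perturbedBirkhoff ?_
  rintro x ⟨hx0, hxr, -⟩ i - j -
  exact ⟨hx0 i j, hxr i ▸ single_le_sum (fun k _ => hx0 i k) (mem_univ j)⟩

theorem exists_mem_perturbedBirkhoff_near (hn : 1 ≤ n) (ht : 0 ≤ t) (hnt : n * t ≤ 1)
    {x : Matrix (Fin n) (Fin n) ℝ} (hx : x ∈ doublyStochastic ℝ (Fin n)) :
    ∃ y ∈ perturbedBirkhoff n t, √(∑ i, ∑ j, (x i j - y i j) ^ 2) ≤ n * (n * t) := by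
  set last : Fin n := ⟨n - 1, by omega⟩
  -- Each row gives up mass `n * t` and gets `t` back in each of its `n - 1` constrained columns;
  -- each constrained column gives up `n * t` and gets `t` back in each of its `n` rows.
  set y : Matrix (Fin n) (Fin n) ℝ :=
    .of fun i j => (1 - n * t) * x i j + if j = last then 0 else t
  have hx0 i j : 0 ≤ x i j := nonneg_of_mem_doublyStochastic hx
  have hx1 i j : x i j ≤ 1 := le_one_of_mem_doublyStochastic hx
  refine ⟨y, ⟨fun i j => ?_, fun i => ?_, fun j hj => ?_⟩, ?_⟩
  · have : 0 ≤ 1 - n * t := by linarith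
    exact add_nonneg (mul_nonneg this (hx0 i j)) (by split_ifs <;> linarith)
  · simp [y, sum_add_distrib, ← mul_sum, sum_row_of_mem_doublyStochastic hx, sum_ite,
      filter_ne', Nat.cast_sub hn]
    ring
  · have hjl : j ≠ last := fun h => by simp [h, last] at hj
    simp [y, hjl, sum_add_distrib, ← mul_sum, sum_col_of_mem_doublyStochastic hx]
  · have hdiff i j : |x i j - y i j| ≤ n * t := by
      have hxy : x i j - y i j = n * t * x i j - if j = last then 0 else t := by
        simp only [y, Matrix.of_apply]; ring
      have hnt0 : 0 ≤ n * t := by positivity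
      have htnt : t ≤ n * t := le_mul_of_one_le_left ht (by exact_mod_cast hn)
      rw [hxy]
      refine abs_sub_le_of_nonneg_of_le (mul_nonneg hnt0 (hx0 i j))
        (mul_le_of_le_one_right hnt0 (hx1 i j)) ?_ ?_ <;> split_ifs <;> linarith
    simpa [Real.sqrt_mul_self] using Real.sqrt_sum_sum_sq_le (by positivity) hdiff

end perturbedBirkhoff

theorem integer_upper_bound_transfer_general
    (n : ℕ) (hn : 1 ≤ n)
    (P P' : Set (Matrix (Fin n) (Fin n) ℝ))
    (hP : P = {x | (∀ i j, 0 ≤ x i j) ∧ (∀ i, ∑ j, x i j = 1) ∧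
      (∀ j, ∑ i, x i j = 1)})
    (f : Matrix (Fin n) (Fin n) ℝ → ℝ)
    (hf_conv : ConvexOn ℝ Set.univ f)
    (hf_int : ∀ x ∈ Set.extremePoints ℝ P, ∃ k : ℤ, f x = (k : ℝ))
    (δ t : ℝ) (hδ : δ ∈ Set.Ioo (0 : ℝ) 1)
    (hδf : ∀ x ∈ Set.extremePoints ℝ P, ∀ y,
      Real.sqrt (∑ i, ∑ j, (x i j - y i j) ^ 2) < δ → |f x - f y| < 1 / 2)
    (ht : 0 < t) (ht' : t < δ / (n * (2 * n - 1)))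
    (hP' : P' = {x | (∀ i j, 0 ≤ x i j) ∧ (∀ i, ∑ j, x i j = 1 - t) ∧
      (∀ j : Fin n, (j : ℕ) < n - 1 → ∑ i, x i j = 1)})
    (K : ℤ) (hK : ∀ x ∈ Set.extremePoints ℝ P', f x ≤ (K : ℝ)) :
    ∀ x ∈ Set.extremePoints ℝ P, f x ≤ (K : ℝ) := by
  subst hP hP'
  have hfP' : ∀ y ∈ perturbedBirkhoff n t, f y ≤ K :=
    ConvexOn.le_of_forall_extremePoints_le (E := Fin n → Fin n → ℝ) isCompact_perturbedBirkhoff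
      (hf_conv.subset (Set.subset_univ _) convex_perturbedBirkhoff)
      hf_conv.continuous_matrix.continuousOn hK
  have hn' : (1 : ℝ) ≤ n := by exact_mod_cast hn
  have htδ : t * (n * (2 * n - 1)) < δ := (lt_div_iff₀ (by nlinarith)).mp ht'
  have hnt : n * t ≤ 1 := by nlinarith [hδ.2]
  have hn2t : n * (n * t) < δ := by
    nlinarith [mul_nonneg (mul_nonneg ht.le (zero_le_one.trans hn')) (sub_nonneg.2 hn')]
  intro x hx
  obtain ⟨y, hy, hxy⟩ := exists_mem_perturbedBirkhoff_near hn ht.le hnt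
    (mem_doublyStochastic_iff_sum.mpr hx.1)
  have hfx : f x < K + 1 / 2 := by
    linarith [(abs_lt.mp (hδf x hx y (hxy.trans_lt hn2t))).2, hfP' y hy]
  obtain ⟨k, hk⟩ := hf_int x hx
  rw [hk] at hfx ⊢
  have hkK : k < K + 1 := by exact_mod_cast (by linarith : (k : ℝ) < K + 1)
  exact_mod_cast Int.lt_add_one_iff.mp hkK

/-- Any integer upper bound of the maximum of `f` over the vertices of the perturbed
polytope `P'(t)` (with `0 < t < δ/(n(2n-1))`) is also an upper bound of the maximum
of `f` over the vertices of the Birkhoff polytope `P`, provided `f` is continuous,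
convex, integer valued on the vertices of `P`, and `δ ∈ (0,1)` satisfies
`|f x - f y| < 1/2` whenever `x` is a vertex of `P` and `‖x - y‖ < δ`. -/
theorem integer_upper_bound_transfer
    (n : ℕ) (hn : 1 ≤ n)
    (P P' : Set (Matrix (Fin n) (Fin n) ℝ))
    (hP : P = {x | (∀ i j, 0 ≤ x i j) ∧ (∀ i, ∑ j, x i j = 1) ∧
      (∀ j, ∑ i, x i j = 1)})
    (f : Matrix (Fin n) (Fin n) ℝ → ℝ)
    (hf_cont : Continuous f)
    (hf_conv : ConvexOn ℝ Set.univ f)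
    (hf_int : ∀ x ∈ Set.extremePoints ℝ P, ∃ k : ℤ, f x = (k : ℝ))
    (δ t : ℝ) (hδ : δ ∈ Set.Ioo (0 : ℝ) 1)
    (hδf : ∀ x ∈ Set.extremePoints ℝ P, ∀ y,
      Real.sqrt (∑ i, ∑ j, (x i j - y i j) ^ 2) < δ → |f x - f y| < 1 / 2)
    (ht : 0 < t) (ht' : t < δ / (n * (2 * n - 1)))
    (hP' : P' = {x | (∀ i j, 0 ≤ x i j) ∧ (∀ i, ∑ j, x i j = 1 - t) ∧
      (∀ j : Fin n, (j : ℕ) < n - 1 → ∑ i, x i j = 1)})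
    (K : ℤ) (hK : ∀ x ∈ Set.extremePoints ℝ P', f x ≤ (K : ℝ)) :
    ∀ x ∈ Set.extremePoints ℝ P, f x ≤ (K : ℝ) :=
  integer_upper_bound_transfer_general n hn P P' hP f hf_conv hf_int δ t hδ hδf ht ht' hP' K hK
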